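/- Define $\varphi_0(b)=l-s(b)+\max A$ and $\varepsilon_0(b)=l-s(b)+\max A - (2z_1+z_2+z_3+3z_4)$ for $b\in B_l$. Then for every $b\in B_l$ with $\tilde f_0 b\in B_l$, $\varphi_0(\tilde f_0 b)=\varphi_0(b)-1$ and $\varepsilon_0(\tilde f_0 b)=\varepsilon_0(b)+1$. -/

import Mathlib

/-!
The difference `φ₀ − ε₀` is the last entry `2z₁+z₂+z₃+3z₄` of `A`, and every branch of `f̃₀`
lowers it by `2`; so it suffices that `φ₀ = l − s + max A` drops by one. In case `(F_i)` the
entry `A_i` is the first maximum of `A`; the branch lowers `l − s + A_i` by one, and the strict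
inequalities of `(F_i)` leave enough room for it to stay the maximum.
-/

/-- An element `(x₁,x₂,x₃,x̄₃,x̄₂,x̄₁)` (fields `x1 x2 x3 y3 y2 y1`). -/
structure C6 where
  x1 : ℤ
  x2 : ℤ
  x3 : ℤ
  y3 : ℤ
  y2 : ℤ
  y1 : ℤ
deriving DecidableEq

attribute [local instance] Classical.propDecidable

noncomputable section

/-- Membership in `B_{≥0}`: all coordinates nonnegative and `x₃ ≡ x̄₃ (mod 2)`. -/
def memB (b : C6) : Prop :=
  0 ≤ b.x1 ∧ 0 ≤ b.x2 ∧ 0 ≤ b.x3 ∧ 0 ≤ b.y3 ∧ 0 ≤ b.y2 ∧ 0 ≤ b.y1 ∧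
    b.x3 % 2 = b.y3 % 2

/-- Return `some b` if all coordinates are nonnegative, else `none` (i.e. `0`). -/
def chk (b : C6) : Option C6 :=
  if 0 ≤ b.x1 ∧ 0 ≤ b.x2 ∧ 0 ≤ b.x3 ∧ 0 ≤ b.y3 ∧ 0 ≤ b.y2 ∧ 0 ≤ b.y1 then some b
  else none

def zz1 (b : C6) : ℤ := b.y1 - b.x1
def zz2 (b : C6) : ℤ := b.y2 - b.y3
def zz3 (b : C6) : ℤ := b.x3 - b.x2
def zz4 (b : C6) : ℤ := (b.y3 - b.x3) / 2

def F1c (b : C6) : Prop :=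
  zz1 b + zz2 b + zz3 b + 3 * zz4 b ≤ 0 ∧ zz1 b + zz2 b + 3 * zz4 b ≤ 0 ∧
    zz1 b + zz2 b ≤ 0 ∧ zz1 b ≤ 0
def F2c (b : C6) : Prop :=
  zz1 b + zz2 b + zz3 b + 3 * zz4 b ≤ 0 ∧ zz2 b + 3 * zz4 b ≤ 0 ∧
    zz2 b ≤ 0 ∧ 0 < zz1 b
def F3c (b : C6) : Prop :=
  zz1 b + zz3 b + 3 * zz4 b ≤ 0 ∧ zz3 b + 3 * zz4 b ≤ 0 ∧ zz4 b ≤ 0 ∧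
    0 < zz2 b ∧ 0 < zz1 b + zz2 b
def F4c (b : C6) : Prop :=
  0 < zz1 b + zz2 b + 3 * zz4 b ∧ 0 < zz2 b + 3 * zz4 b ∧ 0 < zz4 b ∧
    zz3 b ≤ 0 ∧ zz1 b + zz3 b ≤ 0
def F5c (b : C6) : Prop :=
  0 < zz1 b + zz2 b + zz3 b + 3 * zz4 b ∧ 0 < zz3 b + 3 * zz4 b ∧
    0 < zz3 b ∧ zz1 b ≤ 0
def F6c (b : C6) : Prop :=
  0 < zz1 b + zz2 b + zz3 b + 3 * zz4 b ∧ 0 < zz1 b + zz3 b + 3 * zz4 b ∧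
    0 < zz1 b + zz3 b ∧ 0 < zz1 b

def E1c (b : C6) : Prop :=
  zz1 b + zz2 b + zz3 b + 3 * zz4 b < 0 ∧ zz1 b + zz2 b + 3 * zz4 b < 0 ∧
    zz1 b + zz2 b < 0 ∧ zz1 b < 0
def E2c (b : C6) : Prop :=
  zz1 b + zz2 b + zz3 b + 3 * zz4 b < 0 ∧ zz2 b + 3 * zz4 b < 0 ∧
    zz2 b < 0 ∧ 0 ≤ zz1 b
def E3c (b : C6) : Prop :=
  zz1 b + zz3 b + 3 * zz4 b < 0 ∧ zz3 b + 3 * zz4 b < 0 ∧ zz4 b < 0 ∧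
    0 ≤ zz2 b ∧ 0 ≤ zz1 b + zz2 b
def E4c (b : C6) : Prop :=
  0 ≤ zz1 b + zz2 b + 3 * zz4 b ∧ 0 ≤ zz2 b + 3 * zz4 b ∧ 0 ≤ zz4 b ∧
    zz3 b < 0 ∧ zz1 b + zz3 b < 0
def E5c (b : C6) : Prop :=
  0 ≤ zz1 b + zz2 b + zz3 b + 3 * zz4 b ∧ 0 ≤ zz3 b + 3 * zz4 b ∧
    0 ≤ zz3 b ∧ zz1 b < 0
def E6c (b : C6) : Prop :=
  0 ≤ zz1 b + zz2 b + zz3 b + 3 * zz4 b ∧ 0 ≤ zz1 b + zz3 b + 3 * zz4 b ∧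
    0 ≤ zz1 b + zz3 b ∧ 0 ≤ zz1 b

/-- The operator `f̃₀` on `B_{≥0}`, given by the six cases `(F₁)–(F₆)`. -/
def f0op (b : C6) : Option C6 :=
  if F1c b then chk ⟨b.x1 + 1, b.x2, b.x3, b.y3, b.y2, b.y1⟩
  else if F2c b then chk ⟨b.x1, b.x2, b.x3 + 1, b.y3 + 1, b.y2, b.y1 - 1⟩
  else if F3c b then chk ⟨b.x1, b.x2, b.x3 + 2, b.y3, b.y2 - 1, b.y1⟩
  else if F4c b then chk ⟨b.x1, b.x2 + 1, b.x3, b.y3 - 2, b.y2, b.y1⟩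
  else if F5c b then chk ⟨b.x1 + 1, b.x2, b.x3 - 1, b.y3 - 1, b.y2, b.y1⟩
  else if F6c b then chk ⟨b.x1, b.x2, b.x3, b.y3, b.y2, b.y1 - 1⟩
  else none

/-- The operator `ẽ₀` on `B_{≥0}`, given by the six cases `(E₁)–(E₆)`. -/
def e0op (b : C6) : Option C6 :=
  if E1c b then chk ⟨b.x1 - 1, b.x2, b.x3, b.y3, b.y2, b.y1⟩
  else if E2c b then chk ⟨b.x1, b.x2, b.x3 - 1, b.y3 - 1, b.y2, b.y1 + 1⟩
  else if E3c b then chk ⟨b.x1, b.x2, b.x3 - 2, b.y3, b.y2 + 1, b.y1⟩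
  else if E4c b then chk ⟨b.x1, b.x2 - 1, b.x3, b.y3 + 2, b.y2, b.y1⟩
  else if E5c b then chk ⟨b.x1 - 1, b.x2, b.x3 + 1, b.y3 + 1, b.y2, b.y1⟩
  else if E6c b then chk ⟨b.x1, b.x2, b.x3, b.y3, b.y2, b.y1 + 1⟩
  else none

/-- `s(b) = x₁+x₂+(x₃+x̄₃)/2+x̄₂+x̄₁`. -/
def sB (b : C6) : ℤ := b.x1 + b.x2 + (b.x3 + b.y3) / 2 + b.y2 + b.y1

/-- `max A` for `A = (0, z₁, z₁+z₂, z₁+z₂+3z₄, z₁+z₂+z₃+3z₄, 2z₁+z₂+z₃+3z₄)`. -/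
def maxA (b : C6) : ℤ :=
  max 0 (max (zz1 b) (max (zz1 b + zz2 b) (max (zz1 b + zz2 b + 3 * zz4 b)
    (max (zz1 b + zz2 b + zz3 b + 3 * zz4 b)
      (2 * zz1 b + zz2 b + zz3 b + 3 * zz4 b)))))

def phi0 (l : ℤ) (b : C6) : ℤ := l - sB b + maxA b

def eps0 (l : ℤ) (b : C6) : ℤ :=
  l - sB b + maxA b - (2 * zz1 b + zz2 b + zz3 b + 3 * zz4 b)

def wt0 (b : C6) : ℤ := 2 * zz1 b + zz2 b + zz3 b + 3 * zz4 b

theorem eps0_eq_phi0_sub_wt0 (l : ℤ) (b : C6) : eps0 l b = phi0 l b - wt0 b := rfl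

theorem eq_of_chk_eq_some {b c : C6} (h : chk b = some c) : b = c := by
  unfold chk at h
  split_ifs at h
  exact Option.some.inj h

theorem f0op_eq_some_cases {b b' : C6} (hf : f0op b = some b') :
    (F1c b ∧ b' = ⟨b.x1 + 1, b.x2, b.x3, b.y3, b.y2, b.y1⟩) ∨
    (F2c b ∧ b' = ⟨b.x1, b.x2, b.x3 + 1, b.y3 + 1, b.y2, b.y1 - 1⟩) ∨
    (F3c b ∧ b' = ⟨b.x1, b.x2, b.x3 + 2, b.y3, b.y2 - 1, b.y1⟩) ∨
    (F4c b ∧ b' = ⟨b.x1, b.x2 + 1, b.x3, b.y3 - 2, b.y2, b.y1⟩) ∨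
    (F5c b ∧ b' = ⟨b.x1 + 1, b.x2, b.x3 - 1, b.y3 - 1, b.y2, b.y1⟩) ∨
    (F6c b ∧ b' = ⟨b.x1, b.x2, b.x3, b.y3, b.y2, b.y1 - 1⟩) := by
  unfold f0op at hf
  split_ifs at hf <;> obtain rfl := eq_of_chk_eq_some hf <;> tauto

theorem wt0_of_f0op_eq_some {b b' : C6} (hf : f0op b = some b') : wt0 b' = wt0 b - 2 := by
  rcases f0op_eq_some_cases hf with ⟨-, rfl⟩ | ⟨-, rfl⟩ | ⟨-, rfl⟩ | ⟨-, rfl⟩ | ⟨-, rfl⟩ | ⟨-, rfl⟩ <;>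
    simp only [wt0, zz1, zz2, zz3, zz4] <;> omega

theorem phi0_step_of_F1c (l : ℤ) {b : C6} (h : F1c b) :
    phi0 l ⟨b.x1 + 1, b.x2, b.x3, b.y3, b.y2, b.y1⟩ = phi0 l b - 1 := by
  simp only [F1c, phi0, maxA, sB, zz1, zz2, zz3, zz4] at h ⊢
  omega

theorem phi0_step_of_F2c (l : ℤ) {b : C6} (h : F2c b) :
    phi0 l ⟨b.x1, b.x2, b.x3 + 1, b.y3 + 1, b.y2, b.y1 - 1⟩ = phi0 l b - 1 := by
  simp only [F2c, phi0, maxA, sB, zz1, zz2, zz3, zz4] at h ⊢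
  omega

theorem phi0_step_of_F3c (l : ℤ) {b : C6} (h : F3c b) :
    phi0 l ⟨b.x1, b.x2, b.x3 + 2, b.y3, b.y2 - 1, b.y1⟩ = phi0 l b - 1 := by
  simp only [F3c, phi0, maxA, sB, zz1, zz2, zz3, zz4] at h ⊢
  omega

theorem phi0_step_of_F4c (l : ℤ) {b : C6} (h : F4c b) :
    phi0 l ⟨b.x1, b.x2 + 1, b.x3, b.y3 - 2, b.y2, b.y1⟩ = phi0 l b - 1 := by
  simp only [F4c, phi0, maxA, sB, zz1, zz2, zz3, zz4] at h ⊢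
  omega

theorem phi0_step_of_F5c (l : ℤ) {b : C6} (h : F5c b) :
    phi0 l ⟨b.x1 + 1, b.x2, b.x3 - 1, b.y3 - 1, b.y2, b.y1⟩ = phi0 l b - 1 := by
  simp only [F5c, phi0, maxA, sB, zz1, zz2, zz3, zz4] at h ⊢
  omega

theorem phi0_step_of_F6c (l : ℤ) {b : C6} (h : F6c b) :
    phi0 l ⟨b.x1, b.x2, b.x3, b.y3, b.y2, b.y1 - 1⟩ = phi0 l b - 1 := by
  simp only [F6c, phi0, maxA, sB, zz1, zz2, zz3, zz4] at h ⊢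
  omega

theorem phi0_of_f0op_eq_some (l : ℤ) {b b' : C6} (hf : f0op b = some b') :
    phi0 l b' = phi0 l b - 1 := by
  rcases f0op_eq_some_cases hf with ⟨h, rfl⟩ | ⟨h, rfl⟩ | ⟨h, rfl⟩ | ⟨h, rfl⟩ | ⟨h, rfl⟩ | ⟨h, rfl⟩
  exacts [phi0_step_of_F1c l h, phi0_step_of_F2c l h, phi0_step_of_F3c l h,
    phi0_step_of_F4c l h, phi0_step_of_F5c l h, phi0_step_of_F6c l h]

theorem f0_phi0_eps0_general (l : ℤ) (b b' : C6) (hf : f0op b = some b') :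
    phi0 l b' = phi0 l b - 1 ∧ eps0 l b' = eps0 l b + 1 := by
  have hphi := phi0_of_f0op_eq_some l hf
  refine ⟨hphi, ?_⟩
  rw [eps0_eq_phi0_sub_wt0, eps0_eq_phi0_sub_wt0, hphi, wt0_of_f0op_eq_some hf]
  ring

/-- For `b ∈ B_l` with `f̃₀ b ∈ B_l`, `φ₀(f̃₀ b) = φ₀(b) - 1` and
`ε₀(f̃₀ b) = ε₀(b) + 1`. -/
theorem f0_phi0_eps0 (l : ℤ) (b b' : C6) (hb : memB b) (hbl : sB b ≤ l)
    (hf : f0op b = some b') (hb' : memB b') (hb'l : sB b' ≤ l) :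
    phi0 l b' = phi0 l b - 1 ∧ eps0 l b' = eps0 l b + 1 :=
  f0_phi0_eps0_general l b b' hf

end
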